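/- (Exactness of tree-based decomposition.) The optimal value of the tree-based LP equals the optimal value of the source-based (and hence edge-based) multi-commodity flow LP, provided the source-based LP is feasible: every extreme point of the per-source flow polytope {f^s >= 0 : conservation with outflow sum_{k in K_s} d_k at s and inflow d_k at t_k} whose support is acyclic can be decomposed using trees, and conversely convex combinations of tree flows are feasible per-source flows; when the per-source polytope is rewritten via Dantzig–Wolfe with its extreme points, the resulting master LP is the tree-based LP. -/

import Mathlib

inductive IsWalk {V E : Type} (src dst : E → V) : V → V → List E → Prop
  | nil (v : V) : IsWalk src dst v v []
  | cons {v u : V} {e : E} {l : List E} (hsrc : src e = v)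
      (htail : IsWalk src dst (dst e) u l) : IsWalk src dst v u (e :: l)

def diverg {V E : Type} [Fintype E] [DecidableEq V] (src dst : E → V)
    (f : E → ℝ) (v : V) : ℝ :=
  ∑ e ∈ Finset.univ.filter (fun e => src e = v), f e
    - ∑ e ∈ Finset.univ.filter (fun e => dst e = v), f e

def SourceFeasible {V E K : Type} [Fintype V] [Fintype E] [Fintype K]
    [DecidableEq V] (src dst : E → V) (u : E → ℝ) (sk tk : K → V) (d : K → ℝ)
    (g : V → E → ℝ) : Prop :=
  (∀ s e, 0 ≤ g s e) ∧
  (∀ s : V, s ∉ Finset.image sk Finset.univ → g s = 0) ∧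
  (∀ s ∈ Finset.image sk Finset.univ, ∀ i : V,
      diverg src dst (g s) i =
        (if i = s then ∑ k ∈ Finset.univ.filter (fun k => sk k = s), d k else 0)
          - ∑ k ∈ Finset.univ.filter (fun k => sk k = s ∧ tk k = i), d k) ∧
  (∀ e, ∑ s, g s e ≤ u e)

/-- An out-tree rooted at `s` containing all nodes of `T`: for each `t ∈ T`
there is a (simple) walk `pathTo t` from `s` to `t` inside `edges`, and it is
the unique walk from `s` to `t` using only edges of the tree. -/
structure OutTree {V E : Type} (src dst : E → V) (s : V) (T : Set V) where
  edges : Finset E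
  pathTo : V → List E
  walk_pathTo : ∀ t ∈ T, IsWalk src dst s t (pathTo t)
  mem_edges : ∀ t ∈ T, ∀ e ∈ pathTo t, e ∈ edges
  nodup_verts : ∀ t ∈ T, (s :: (pathTo t).map dst).Nodup
  unique_walk : ∀ t ∈ T, ∀ l : List E, (∀ e ∈ l, e ∈ edges) →
      IsWalk src dst s t l → l = pathTo t

/-- The sinks of all commodities with source `s`. -/
def sinkSet {V K : Type} (sk tk : K → V) (s : V) : Set V :=
  {v | ∃ k, sk k = s ∧ tk k = v}

/-- `fbar^e_τ = ∑_{k ∈ K_s} d_k·[e on the tree path from s to t_k]`. -/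
def fbarT {V E K : Type} [Fintype K] [DecidableEq V] [DecidableEq E]
    (src dst : E → V) (sk tk : K → V) (d : K → ℝ) (s : V)
    (τ : OutTree src dst s (sinkSet sk tk s)) (e : E) : ℝ :=
  ∑ k ∈ Finset.univ.filter (fun k => sk k = s),
    if e ∈ τ.pathTo (tk k) then d k else 0

/-!
A solution of the tree LP yields a source-feasible flow of the same cost: each tree flow has
exactly the divergences required of its source. Conversely, every feasible per-source flow `f`
dominates a convex combination of tree flows, by cycle cancelling. If the support of `f`
contains an undirected cycle, a circulation around it writes `f` as a convex combination of two
flows of smaller support (or dominates one). If the support is a forest, walks in it from the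
source to the sinks form an out-tree, and `f` carries across each bridge `e` the whole demand
beyond `e`, which bounds the tree flow on `e`. As costs are nonnegative, the two LPs have the
same infimum.
-/

open Finset Function

section Walks
variable {V E : Type} {src dst : E → V}

variable (src dst) in
def IsOutClosed (A : Set E) (R : Set V) : Prop :=
  ∀ e ∈ A, src e ∈ R → dst e ∈ R

theorem IsWalk.target_mem {A : Set E} {R : Set V} (hR : IsOutClosed src dst A R)
    {a b : V} {l : List E} (hw : IsWalk src dst a b l) (hl : ∀ e ∈ l, e ∈ A) (ha : a ∈ R) :
    b ∈ R := by
  induction hw with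
  | nil => exact ha
  | cons hsrc _ ih =>
    subst hsrc
    exact ih (fun e he => hl e (List.mem_cons_of_mem _ he)) (hR _ (hl _ List.mem_cons_self) ha)

theorem IsWalk.src_mem {A : Set E} {R : Set V} (hR : IsOutClosed src dst A R)
    {a b : V} {l : List E} (hw : IsWalk src dst a b l) (hl : ∀ e ∈ l, e ∈ A) (ha : a ∈ R) :
    ∀ e ∈ l, src e ∈ R := by
  induction hw with
  | nil => simp
  | cons hsrc _ ih =>
    subst hsrc
    exact List.forall_mem_cons.2 ⟨ha, ih (fun e he => hl e (List.mem_cons_of_mem _ he))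
      (hR _ (hl _ List.mem_cons_self) ha)⟩

theorem IsWalk.target_mem_of_mem {A : Set E} {R : Set V} (hR : IsOutClosed src dst A R)
    {a b : V} {l : List E} (hw : IsWalk src dst a b l) (hl : ∀ e ∈ l, e ∈ A) {e : E}
    (he : e ∈ l) (hdst : dst e ∈ R) : b ∈ R := by
  induction hw with
  | nil => simp at he
  | @cons v u e' r hsrc htail ih =>
    have hr : ∀ e ∈ r, e ∈ A := fun e he => hl e (List.mem_cons_of_mem _ he)
    rcases List.mem_cons.1 he with rfl | he
    · exact htail.target_mem hR hr hdst
    · exact ih hr he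

variable (src dst) in
def UAdj (A : Set E) (x y : V) : Prop :=
  ∃ e ∈ A, (src e = x ∧ dst e = y) ∨ (src e = y ∧ dst e = x)

variable (src dst) in
/-- Forests are encoded as edge sets all of whose edges are bridges. -/
def IsForest (A : Set E) : Prop :=
  ∀ e ∈ A, ¬ Relation.ReflTransGen (UAdj src dst (A \ {e})) (dst e) (src e)

variable (src dst) in
def headSide (A : Set E) (e : E) : Set V :=
  {v | Relation.ReflTransGen (UAdj src dst (A \ {e})) (dst e) v}

theorem dst_mem_headSide (A : Set E) (e : E) : dst e ∈ headSide src dst A e :=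
  Relation.ReflTransGen.refl

theorem src_mem_headSide_iff {A : Set E} {e e' : E} (he' : e' ∈ A) (hne : e' ≠ e) :
    src e' ∈ headSide src dst A e ↔ dst e' ∈ headSide src dst A e :=
  ⟨fun h => h.tail ⟨e', ⟨he', hne⟩, Or.inl ⟨rfl, rfl⟩⟩,
    fun h => h.tail ⟨e', ⟨he', hne⟩, Or.inr ⟨rfl, rfl⟩⟩⟩

theorem IsForest.isOutClosed_headSide {A : Set E} (hA : IsForest src dst A) {e : E}
    (he : e ∈ A) : IsOutClosed src dst A (headSide src dst A e) := by
  intro e' he' hs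
  by_cases hne : e' = e
  · subst hne
    exact absurd hs (hA e' he')
  · exact (src_mem_headSide_iff he' hne).1 hs

theorem isOutClosed_compl_headSide (A : Set E) (e : E) :
    IsOutClosed src dst (A \ {e}) (headSide src dst A e)ᶜ :=
  fun _ he' hs hd => hs ((src_mem_headSide_iff he'.1 he'.2).2 hd)

theorem IsForest.eq_nil_of_isWalk_self {A : Set E} (hA : IsForest src dst A) {v : V}
    {l : List E} (hw : IsWalk src dst v v l) (hl : ∀ e ∈ l, e ∈ A) : l = [] := by
  cases hw with
  | nil => rfl
  | @cons _ _ e r hsrc htail =>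
    have he : e ∈ A := hl e List.mem_cons_self
    refine absurd ?_ (hA e he)
    rw [hsrc]
    exact htail.target_mem (hA.isOutClosed_headSide he)
      (fun e' h => hl e' (List.mem_cons_of_mem _ h)) (dst_mem_headSide A e)

theorem IsForest.nodup_verts {A : Set E} (hA : IsForest src dst A) {s t : V} {l : List E}
    (hw : IsWalk src dst s t l) (hl : ∀ e ∈ l, e ∈ A) : (s :: l.map dst).Nodup := by
  induction hw with
  | nil => simp
  | @cons v u e r hsrc htail ih =>
    have hr : ∀ e' ∈ r, e' ∈ A := fun e' h => hl e' (List.mem_cons_of_mem _ h)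
    have he : e ∈ A := hl e List.mem_cons_self
    have hcl := hA.isOutClosed_headSide he
    have hsrcs := htail.src_mem hcl hr (dst_mem_headSide A e)
    refine List.nodup_cons.2 ⟨?_, ih hr⟩
    subst hsrc
    simp only [List.map_cons, List.mem_cons, List.mem_map]
    rintro (h | ⟨e', he', h⟩)
    · exact hA e he (h ▸ Relation.ReflTransGen.refl)
    · exact hA e he (h ▸ hcl e' (hr e' he') (hsrcs e' he'))

theorem IsForest.walk_eq {A : Set E} (hA : IsForest src dst A) {s t : V} {l₁ l₂ : List E}
    (h₁ : IsWalk src dst s t l₁) (hl₁ : ∀ e ∈ l₁, e ∈ A)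
    (h₂ : IsWalk src dst s t l₂) (hl₂ : ∀ e ∈ l₂, e ∈ A) : l₁ = l₂ := by
  induction h₁ generalizing l₂ with
  | nil => exact (hA.eq_nil_of_isWalk_self h₂ hl₂).symm
  | @cons v u e₁ r₁ hsrc₁ htail₁ ih =>
    cases h₂ with
    | nil => exact hA.eq_nil_of_isWalk_self (IsWalk.cons hsrc₁ htail₁) hl₁
    | @cons _ _ e₂ r₂ hsrc₂ htail₂ =>
    have hr₁ : ∀ e ∈ r₁, e ∈ A := fun e h => hl₁ e (List.mem_cons_of_mem _ h)
    have hr₂ : ∀ e ∈ r₂, e ∈ A := fun e h => hl₂ e (List.mem_cons_of_mem _ h)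
    have he₁ : e₁ ∈ A := hl₁ e₁ List.mem_cons_self
    have he₂ : e₂ ∈ A := hl₂ e₂ List.mem_cons_self
    by_cases heq : e₁ = e₂
    · subst heq
      rw [ih hr₁ htail₂ hr₂]
    exfalso
    -- `u` lies on the head side of `e₁` and `v` does not, so the second walk crosses `e₁`;
    -- it then returns to `v = src e₂` after leaving through `e₂`.
    have hu : u ∈ headSide src dst A e₁ :=
      htail₁.target_mem (hA.isOutClosed_headSide he₁) hr₁ (dst_mem_headSide A e₁)
    have hmem : e₁ ∈ r₂ := by
      by_contra hnot
      have hl₂' : ∀ e ∈ e₂ :: r₂, e ∈ A \ {e₁} := by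
        intro e h
        refine ⟨hl₂ e h, ?_⟩
        rintro rfl
        rcases List.mem_cons.1 h with h | h
        · exact heq h
        · exact hnot h
      exact (IsWalk.cons hsrc₂ htail₂).target_mem (isOutClosed_compl_headSide A e₁) hl₂'
        (hsrc₁ ▸ hA e₁ he₁) hu
    refine hA e₂ he₂ ?_
    rw [hsrc₂, ← hsrc₁]
    exact htail₂.src_mem (hA.isOutClosed_headSide he₂) hr₂ (dst_mem_headSide A e₂) e₁ hmem

def OutTree.ofForest {s : V} {T : Set V} {A : Finset E} (hA : IsForest src dst (A : Set E))
    (p : V → List E) (hp : ∀ t ∈ T, IsWalk src dst s t (p t))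
    (hpA : ∀ t ∈ T, ∀ e ∈ p t, e ∈ A) : OutTree src dst s T where
  edges := A
  pathTo := p
  walk_pathTo := hp
  mem_edges := hpA
  nodup_verts t ht := hA.nodup_verts (hp t ht) (hpA t ht)
  unique_walk t ht _ hl hw := hA.walk_eq hw hl (hp t ht) (hpA t ht)

end Walks

section Divergence
variable {V E : Type} [Fintype E] [DecidableEq V] {src dst : E → V}

theorem diverg_add (f g : E → ℝ) (v : V) :
    diverg src dst (f + g) v = diverg src dst f v + diverg src dst g v := by
  simp only [diverg, Pi.add_apply, sum_add_distrib]
  ring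

theorem diverg_sub (f g : E → ℝ) (v : V) :
    diverg src dst (f - g) v = diverg src dst f v - diverg src dst g v := by
  simp only [diverg, Pi.sub_apply, sum_sub_distrib]
  ring

theorem diverg_smul (c : ℝ) (f : E → ℝ) (v : V) :
    diverg src dst (c • f) v = c * diverg src dst f v := by
  simp only [diverg, Pi.smul_apply, smul_eq_mul, ← mul_sum]
  ring

theorem diverg_sum {ι : Type*} (s : Finset ι) (F : ι → E → ℝ) (v : V) :
    diverg src dst (∑ i ∈ s, F i) v = ∑ i ∈ s, diverg src dst (F i) v := by
  simp only [diverg, Finset.sum_apply, sum_sub_distrib]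
  rw [sum_comm, sum_comm (s := univ.filter (dst · = v))]

theorem diverg_single [DecidableEq E] (e : E) (c : ℝ) (v : V) :
    diverg src dst (Pi.single e c) v
      = (if src e = v then c else 0) - (if dst e = v then c else 0) := by
  simp [diverg, Finset.sum_pi_single']

theorem diverg_indicator_of_isWalk [DecidableEq E] {a b : V} {l : List E}
    (hw : IsWalk src dst a b l) (hnd : l.Nodup) (c : ℝ) (v : V) :
    diverg src dst (fun e => if e ∈ l then c else 0) v
      = (if a = v then c else 0) - (if b = v then c else 0) := by
  induction hw with
  | nil => simp [diverg]
  | @cons w u e r hsrc htail ih =>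
    obtain ⟨her, hnd⟩ := List.nodup_cons.1 hnd
    have hsplit : (fun e' => if e' ∈ e :: r then c else 0)
        = Pi.single e c + fun e' => if e' ∈ r then c else 0 := by
      ext e'
      by_cases h : e' = e
      · subst h
        simp [her]
      · simp [h]
    rw [hsplit, diverg_add, diverg_single, ih hnd, hsrc]
    ring

theorem sum_diverg (f : E → ℝ) (R : Finset V) :
    ∑ v ∈ R, diverg src dst f v
      = ∑ e, ((if src e ∈ R then f e else 0) - (if dst e ∈ R then f e else 0)) := by
  have key : ∀ g : E → V, ∑ v ∈ R, ∑ e ∈ univ.filter (g · = v), f e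
      = ∑ e, if g e ∈ R then f e else 0 := by
    intro g
    simp_rw [sum_filter]
    rw [sum_comm]
    exact sum_congr rfl fun e _ => sum_ite_eq R (g e) _
  simp only [diverg, sum_sub_distrib, key]

theorem sum_diverg_headSide [DecidableEq E] {f : E → ℝ} (hA : IsForest src dst (support f)) {e : E}
    (he : e ∈ support f) {R : Finset V}
    (hR : ∀ v, v ∈ R ↔ v ∈ headSide src dst (support f) e) :
    ∑ v ∈ R, diverg src dst f v = -f e := by
  have hterm : ∀ e', ((if src e' ∈ R then f e' else 0) - (if dst e' ∈ R then f e' else 0))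
      = if e' = e then -f e else 0 := by
    intro e'
    by_cases hee : e' = e
    · subst hee
      have hs : src e' ∉ headSide src dst (support f) e' := hA e' he
      simp [hR, hs, dst_mem_headSide]
    by_cases hfe : f e' = 0
    · simp [hfe, hee]
    have hiff : src e' ∈ R ↔ dst e' ∈ R := by
      rw [hR, hR]
      exact src_mem_headSide_iff (mem_support.2 hfe) hee
    simp [hiff, hee]
  rw [sum_diverg, sum_congr rfl fun e' _ => hterm e', sum_ite_eq' univ e]
  simp

end Divergence

theorem exists_fin_of_mem_convexHull_range {α β : Type*} [AddCommGroup β] [Module ℝ β]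
    {z : α → β} {y : β} (hy : y ∈ convexHull ℝ (Set.range z)) :
    ∃ (n : ℕ) (a : Fin n → α) (w : Fin n → ℝ),
      (∀ i, 0 ≤ w i) ∧ ∑ i, w i = 1 ∧ ∑ i, w i • z (a i) = y := by
  obtain ⟨ι, _, w, p, hw₀, hw₁, hp, rfl⟩ := mem_convexHull_iff_exists_fintype.1 hy
  choose a ha using hp
  let σ := (Fintype.equivFin ι).symm
  refine ⟨Fintype.card ι, a ∘ σ, w ∘ σ, fun i => hw₀ _, by rw [← hw₁]; exact σ.sum_comp w, ?_⟩
  simp only [comp_apply, ha]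
  exact σ.sum_comp fun i => w i • p i

section CycleCancelling
variable {V E : Type} [Fintype E] [DecidableEq V] {src dst : E → V}

theorem exists_unitFlow_of_reflTransGen {B : Set E} {a b : V}
    (h : Relation.ReflTransGen (UAdj src dst B) a b) :
    ∃ φ : E → ℝ, support φ ⊆ B ∧
      ∀ v, diverg src dst φ v = (if a = v then 1 else 0) - (if b = v then 1 else 0) := by
  classical
  induction h with
  | refl => exact ⟨0, by simp, fun v => by simp [diverg]⟩
  | tail _ hbc ih =>
    obtain ⟨φ, hφB, hφ⟩ := ih
    obtain ⟨e, heB, ⟨rfl, rfl⟩ | ⟨rfl, rfl⟩⟩ := hbc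
    · refine ⟨φ + Pi.single e 1, ?_, fun v => ?_⟩
      · refine (support_add _ _).trans (Set.union_subset hφB ?_)
        exact Pi.support_single_subset.trans (Set.singleton_subset_iff.2 heB)
      · rw [diverg_add, hφ, diverg_single]
        ring
    · refine ⟨φ - Pi.single e 1, ?_, fun v => ?_⟩
      · refine (support_sub _ _).trans (Set.union_subset hφB ?_)
        exact Pi.support_single_subset.trans (Set.singleton_subset_iff.2 heB)
      · rw [diverg_sub, hφ, diverg_single]
        ring

theorem exists_circulation_of_not_isForest {A : Set E} (hA : ¬ IsForest src dst A) :
    ∃ δ : E → ℝ, (∃ e, 0 < δ e) ∧ support δ ⊆ A ∧ ∀ v, diverg src dst δ v = 0 := by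
  classical
  simp only [IsForest, not_forall, not_not] at hA
  obtain ⟨e, he, hpath⟩ := hA
  obtain ⟨φ, hφA, hφ⟩ := exists_unitFlow_of_reflTransGen hpath
  have hφe : φ e = 0 := notMem_support.1 fun h => (hφA h).2 rfl
  -- the unit flow from `dst e` back to `src e` avoiding `e`, closed up by `e`
  refine ⟨φ + Pi.single e 1, ⟨e, by simp [hφe]⟩, ?_, fun v => ?_⟩
  · refine (support_add _ _).trans (Set.union_subset (hφA.trans Set.sdiff_subset) ?_)
    exact Pi.support_single_subset.trans (Set.singleton_subset_iff.2 he)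
  · rw [diverg_add, hφ, diverg_single]
    ring

/-- Ratio test: move `f` against `δ` until the first edge where `δ` is positive is emptied. -/
theorem exists_pos_sub_smul_nonneg {f δ : E → ℝ} (hf : 0 ≤ f) (hδ : support δ ⊆ support f)
    (hpos : ∃ e, 0 < δ e) :
    ∃ θ : ℝ, 0 < θ ∧ 0 ≤ f - θ • δ ∧ support (f - θ • δ) ⊂ support f := by
  classical
  obtain ⟨e₀, he₀, hmin⟩ := (univ.filter (0 < δ ·)).exists_min_image (fun e => f e / δ e)
    (by simpa [Finset.Nonempty] using hpos)
  simp only [mem_filter, mem_univ, true_and] at he₀ hmin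
  have hfe₀ : 0 < f e₀ := (hf e₀).lt_of_ne' (hδ he₀.ne')
  have hθ : 0 < f e₀ / δ e₀ := div_pos hfe₀ he₀
  have hsub : support (f - (f e₀ / δ e₀) • δ) ⊆ support f := by
    intro e he hfe
    have hδe : δ e = 0 := notMem_support.1 fun h => hδ h hfe
    simp [hfe, hδe] at he
  refine ⟨f e₀ / δ e₀, hθ, fun e => ?_, (Set.ssubset_iff_of_subset hsub).2 ⟨e₀, hfe₀.ne', ?_⟩⟩
  · simp only [Pi.zero_apply, Pi.sub_apply, Pi.smul_apply, smul_eq_mul, sub_nonneg]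
    rcases le_or_gt (δ e) 0 with h | h
    · exact (mul_nonpos_of_nonneg_of_nonpos hθ.le h).trans (hf e)
    · exact (le_div_iff₀ h).1 (hmin e h)
  · simp [div_mul_cancel₀ _ he₀.ne']

/-- Cycle cancelling, by induction on the size of the support: a circulation on a cycle of the
support splits `f` into two flows of smaller support, or, if it has no negative entry,
yields one below `f`. -/
theorem exists_mem_convexHull_le (C : Set (E → ℝ)) (b : V → ℝ)
    (hbase : ∀ f : E → ℝ, 0 ≤ f → (∀ v, diverg src dst f v = b v) →
      IsForest src dst (support f) → ∃ g ∈ C, g ≤ f)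
    (f : E → ℝ) (hf : 0 ≤ f) (hfb : ∀ v, diverg src dst f v = b v) :
    ∃ g ∈ convexHull ℝ C, g ≤ f := by
  induction hn : (support f).ncard using Nat.strong_induction_on generalizing f with
  | _ n ih =>
  by_cases hA : IsForest src dst (support f)
  · obtain ⟨g, hgC, hgf⟩ := hbase f hf hfb hA
    exact ⟨g, subset_convexHull ℝ C hgC, hgf⟩
  obtain ⟨δ, hδpos, hδA, hδdiv⟩ := exists_circulation_of_not_isForest hA
  have hsmaller : ∀ θ : ℝ, 0 ≤ f - θ • δ → support (f - θ • δ) ⊂ support f →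
      ∃ g ∈ convexHull ℝ C, g ≤ f - θ • δ := fun θ h₀ hss =>
    ih _ (hn ▸ Set.ncard_lt_ncard hss (Set.toFinite _)) _ h₀
      (fun v => by rw [diverg_sub, diverg_smul, hδdiv, hfb]; ring) rfl
  obtain ⟨θ, hθ, hf₁, hss₁⟩ := exists_pos_sub_smul_nonneg hf hδA hδpos
  obtain ⟨g₁, hg₁, hgf₁⟩ := hsmaller θ hf₁ hss₁
  by_cases hneg : ∃ e, δ e < 0
  · obtain ⟨θ', hθ', hf₂, hss₂⟩ := exists_pos_sub_smul_nonneg (δ := -δ) hf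
      (by rwa [support_neg]) (by simpa using hneg)
    rw [smul_neg, ← neg_smul] at hf₂ hss₂
    obtain ⟨g₂, hg₂, hgf₂⟩ := hsmaller (-θ') hf₂ hss₂
    have hsum : 0 < θ + θ' := add_pos hθ hθ'
    refine ⟨(θ' / (θ + θ')) • g₁ + (θ / (θ + θ')) • g₂,
      convex_convexHull ℝ C hg₁ hg₂ (by positivity) (by positivity) (by field_simp; ring), ?_⟩
    calc (θ' / (θ + θ')) • g₁ + (θ / (θ + θ')) • g₂
        ≤ (θ' / (θ + θ')) • (f - θ • δ) + (θ / (θ + θ')) • (f - (-θ') • δ) :=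
          add_le_add (smul_le_smul_of_nonneg_left hgf₁ (by positivity))
            (smul_le_smul_of_nonneg_left hgf₂ (by positivity))
      _ = f := by
          ext e
          simp only [Pi.add_apply, Pi.smul_apply, Pi.sub_apply, smul_eq_mul]
          field_simp
          ring
  · push Not at hneg
    refine ⟨g₁, hg₁, hgf₁.trans fun e => ?_⟩
    simpa using mul_nonneg hθ.le (hneg e)

end CycleCancelling

/-- The vertices that can reach `t` receive no flow from outside, so their total divergence is
nonnegative; as `t` has negative divergence, `s` is among them. -/
theorem exists_walk_of_diverg_neg {V E : Type} [Fintype V] [Fintype E] [DecidableEq V]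
    {src dst : E → V} {f : E → ℝ} (hf : 0 ≤ f) {s t : V}
    (hle : ∀ v ≠ s, diverg src dst f v ≤ 0) (ht : diverg src dst f t < 0) :
    ∃ l, IsWalk src dst s t l ∧ ∀ e ∈ l, e ∈ support f := by
  classical
  set R : Finset V := univ.filter fun v => ∃ l, IsWalk src dst v t l ∧ ∀ e ∈ l, e ∈ support f
  have htR : t ∈ R := by simpa [R] using ⟨[], IsWalk.nil t, by simp⟩
  have hin : ∀ e ∈ support f, dst e ∈ R → src e ∈ R := by
    intro e he hd
    obtain ⟨l, hl, hlf⟩ := (by simpa [R] using hd : ∃ l, IsWalk src dst (dst e) t l ∧ _)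
    simpa [R] using ⟨e :: l, IsWalk.cons rfl hl, List.forall_mem_cons.2 ⟨he, hlf⟩⟩
  have hcut : 0 ≤ ∑ v ∈ R, diverg src dst f v := by
    rw [sum_diverg]
    refine sum_nonneg fun e _ => ?_
    by_cases he : f e = 0
    · simp [he]
    have := hf e
    by_cases hd : dst e ∈ R
    · simp [hd, hin e he hd]
    · split_ifs <;> simp_all
  by_contra hs
  have hsR : s ∉ R := by simpa [R] using hs
  have : ∑ v ∈ R, diverg src dst f v < ∑ v ∈ R, (0 : ℝ) :=
    sum_lt_sum (fun v hv => hle v (ne_of_mem_of_not_mem hv hsR)) ⟨t, htR, ht⟩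
  simp only [sum_const_zero] at this
  linarith

/-- The divergences that `SourceFeasible` prescribes to the flow of source `s`. -/
def sourcePattern {V K : Type} [Fintype K] [DecidableEq V] (sk tk : K → V) (d : K → ℝ)
    (s i : V) : ℝ :=
  (if i = s then ∑ k ∈ Finset.univ.filter (fun k => sk k = s), d k else 0)
    - ∑ k ∈ Finset.univ.filter (fun k => sk k = s ∧ tk k = i), d k

def treeFlow {V E K : Type} [Fintype K] [DecidableEq V] [DecidableEq E] (src dst : E → V)
    (sk tk : K → V) (d : K → ℝ) (s : V) {n : ℕ}
    (τ : Fin n → OutTree src dst s (sinkSet sk tk s)) (x : Fin n → ℝ) (e : E) : ℝ :=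
  ∑ i, fbarT src dst sk tk d s (τ i) e * x i

section Trees
variable {V E K : Type} [Fintype K] [DecidableEq V] {src dst : E → V} {sk tk : K → V}
  {d : K → ℝ} {s : V}

theorem sourcePattern_nonpos (hd : ∀ k, 0 ≤ d k) {v : V} (hv : v ≠ s) :
    sourcePattern sk tk d s v ≤ 0 := by
  simpa [sourcePattern, hv] using sum_nonneg fun k (_ : k ∈ univ.filter _) => hd k

theorem sourcePattern_neg (hd : ∀ k, 0 < d k) {t : V} (ht : t ∈ sinkSet sk tk s)
    (hts : t ≠ s) : sourcePattern sk tk d s t < 0 := by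
  obtain ⟨k, hks, rfl⟩ := ht
  have := single_le_sum (fun k _ => (hd k).le) (by simp [hks] : k ∈ univ.filter
    (fun k' => sk k' = s ∧ tk k' = tk k))
  simp only [sourcePattern, if_neg hts, zero_sub, neg_neg_iff_pos]
  exact (hd k).trans_le this

theorem sum_sourcePattern_of_notMem {R : Finset V} (hs : s ∉ R) :
    ∑ v ∈ R, sourcePattern sk tk d s v
      = -∑ k ∈ univ.filter (sk · = s), if tk k ∈ R then d k else 0 := by
  have hv : ∀ v ∈ R, sourcePattern sk tk d s v
      = -∑ k ∈ univ.filter (sk · = s), if tk k = v then d k else 0 := by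
    intro v hv
    rw [sourcePattern, if_neg (ne_of_mem_of_not_mem hv hs), ← filter_filter, sum_filter]
    ring
  rw [sum_congr rfl hv, sum_neg_distrib, sum_comm]
  exact congrArg _ (sum_congr rfl fun k _ => sum_ite_eq R (tk k) _)

theorem exists_walk_to_sinks [Fintype V] [Fintype E] (hd : ∀ k, 0 < d k) {f : E → ℝ} (hf : 0 ≤ f)
    (hdiv : ∀ v, diverg src dst f v = sourcePattern sk tk d s v) :
    ∃ p : V → List E, ∀ t ∈ sinkSet sk tk s,
      IsWalk src dst s t (p t) ∧ ∀ e ∈ p t, e ∈ support f := by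
  have hwalk : ∀ t, ∃ l : List E, t ∈ sinkSet sk tk s →
      IsWalk src dst s t l ∧ ∀ e ∈ l, e ∈ support f := by
    intro t
    by_cases hts : t = s
    · subst hts
      exact ⟨[], fun _ => ⟨IsWalk.nil t, by simp⟩⟩
    by_cases ht : t ∈ sinkSet sk tk s
    · obtain ⟨l, hl⟩ := exists_walk_of_diverg_neg hf
        (fun v hv => (hdiv v).trans_le (sourcePattern_nonpos (fun k => (hd k).le) hv))
        ((hdiv t).trans_lt (sourcePattern_neg hd ht hts))
      exact ⟨l, fun _ => hl⟩
    · exact ⟨[], fun h => absurd h ht⟩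
  choose p hp using hwalk
  exact ⟨p, hp⟩

variable [DecidableEq E]

theorem fbarT_nonneg (hd : ∀ k, 0 ≤ d k) (τ : OutTree src dst s (sinkSet sk tk s)) :
    0 ≤ fbarT src dst sk tk d s τ :=
  fun _ => sum_nonneg fun k _ => by split_ifs <;> simp [hd k]

theorem fbarT_eq_zero_of_notMem_edges (τ : OutTree src dst s (sinkSet sk tk s)) {e : E}
    (he : e ∉ τ.edges) : fbarT src dst sk tk d s τ e = 0 :=
  sum_eq_zero fun k hk => if_neg fun hmem =>
    he (τ.mem_edges _ ⟨k, (mem_filter.1 hk).2, rfl⟩ e hmem)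

theorem treeFlow_nonneg (hd : ∀ k, 0 ≤ d k) {n : ℕ}
    (τ : Fin n → OutTree src dst s (sinkSet sk tk s)) {x : Fin n → ℝ} (hx : ∀ i, 0 ≤ x i) :
    0 ≤ treeFlow src dst sk tk d s τ x :=
  fun _ => sum_nonneg fun i _ => mul_nonneg (fbarT_nonneg hd (τ i) _) (hx i)

variable [Fintype E]

theorem diverg_fbarT (τ : OutTree src dst s (sinkSet sk tk s)) (v : V) :
    diverg src dst (fbarT src dst sk tk d s τ) v = sourcePattern sk tk d s v := by
  have hsum : fbarT src dst sk tk d s τ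
      = ∑ k ∈ univ.filter (sk · = s), fun e => if e ∈ τ.pathTo (tk k) then d k else 0 := by
    ext e
    simp [fbarT, Finset.sum_apply]
  have hk : ∀ k ∈ univ.filter (sk · = s),
      diverg src dst (fun e => if e ∈ τ.pathTo (tk k) then d k else 0) v
        = (if v = s then d k else 0) - (if tk k = v then d k else 0) := by
    intro k hk
    have ht : tk k ∈ sinkSet sk tk s := ⟨k, (mem_filter.1 hk).2, rfl⟩
    rw [diverg_indicator_of_isWalk (τ.walk_pathTo _ ht)
      (List.nodup_cons.1 (τ.nodup_verts _ ht)).2.of_map]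
    simp only [@eq_comm _ s v]
  rw [hsum, diverg_sum, sum_congr rfl hk, sum_sub_distrib, sourcePattern, ← filter_filter,
    sum_filter (p := (tk · = v))]
  congr 1
  split_ifs <;> simp

theorem diverg_treeFlow {n : ℕ} (τ : Fin n → OutTree src dst s (sinkSet sk tk s))
    {x : Fin n → ℝ} (hx : ∑ i, x i = 1) (v : V) :
    diverg src dst (treeFlow src dst sk tk d s τ x) v = sourcePattern sk tk d s v := by
  have : treeFlow src dst sk tk d s τ x = ∑ i, x i • fbarT src dst sk tk d s (τ i) := by
    ext e
    simp [treeFlow, Finset.sum_apply, mul_comm]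
  simp only [this, diverg_sum, diverg_smul, diverg_fbarT, ← sum_mul, hx, one_mul]

theorem sum_treeCost {n : ℕ} (τ : Fin n → OutTree src dst s (sinkSet sk tk s))
    (x : Fin n → ℝ) (c : E → ℝ) :
    ∑ i, (∑ e ∈ (τ i).edges, fbarT src dst sk tk d s (τ i) e * c e) * x i
      = ∑ e, c e * treeFlow src dst sk tk d s τ x e := by
  have hedges : ∀ i, ∑ e ∈ (τ i).edges, fbarT src dst sk tk d s (τ i) e * c e
      = ∑ e, fbarT src dst sk tk d s (τ i) e * c e := fun i =>
    sum_subset (subset_univ _) fun e _ he => by rw [fbarT_eq_zero_of_notMem_edges _ he, zero_mul]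
  simp only [hedges, treeFlow, sum_mul, mul_sum]
  rw [sum_comm]
  exact sum_congr rfl fun _ _ => sum_congr rfl fun _ _ => by ring

variable [Fintype V]

/-- The flow on a tree edge `e` is the demand beyond `e`, which is exactly what `f` must send
across the bridge `e`. -/
theorem fbarT_le_of_isForest (hd : ∀ k, 0 ≤ d k) {f : E → ℝ} (hf : 0 ≤ f)
    (hdiv : ∀ v, diverg src dst f v = sourcePattern sk tk d s v)
    (hA : IsForest src dst (support f)) (τ : OutTree src dst s (sinkSet sk tk s))
    (hτ : ∀ e ∈ τ.edges, e ∈ support f) :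
    fbarT src dst sk tk d s τ ≤ f := by
  classical
  intro e
  by_cases hused : ∃ k, sk k = s ∧ e ∈ τ.pathTo (tk k)
  swap
  · push Not at hused
    rw [show fbarT src dst sk tk d s τ e = 0 from
      sum_eq_zero fun k hk => if_neg (hused k (mem_filter.1 hk).2)]
    exact hf e
  obtain ⟨k₀, hk₀, hek₀⟩ := hused
  have hpath : ∀ k, sk k = s → IsWalk src dst s (tk k) (τ.pathTo (tk k)) ∧
      ∀ e ∈ τ.pathTo (tk k), e ∈ support f := fun k hk =>
    ⟨τ.walk_pathTo _ ⟨k, hk, rfl⟩, fun e he => hτ e (τ.mem_edges _ ⟨k, hk, rfl⟩ e he)⟩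
  have he : e ∈ support f := (hpath k₀ hk₀).2 e hek₀
  have hcl := hA.isOutClosed_headSide he
  set R : Finset V := univ.filter (· ∈ headSide src dst (support f) e)
  have hR : ∀ v, v ∈ R ↔ v ∈ headSide src dst (support f) e := by simp [R]
  have hsR : s ∉ R := fun hs => hA e he <|
    (hpath k₀ hk₀).1.src_mem hcl (hpath k₀ hk₀).2 ((hR s).1 hs) e hek₀
  have hfe : f e = ∑ k ∈ univ.filter (sk · = s), if tk k ∈ R then d k else 0 := by
    have := sum_diverg_headSide hA he hR
    rw [sum_congr rfl fun v _ => hdiv v, sum_sourcePattern_of_notMem hsR] at this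
    linarith
  rw [hfe]
  refine sum_le_sum fun k hk => ?_
  have hks := (mem_filter.1 hk).2
  by_cases hek : e ∈ τ.pathTo (tk k)
  · rw [if_pos hek, if_pos ((hR _).2 ((hpath k hks).1.target_mem_of_mem hcl (hpath k hks).2
      hek (dst_mem_headSide _ e)))]
  · rw [if_neg hek]
    split_ifs
    exacts [hd k, le_rfl]

theorem exists_outTree_le (hd : ∀ k, 0 < d k) {f : E → ℝ} (hf : 0 ≤ f)
    (hdiv : ∀ v, diverg src dst f v = sourcePattern sk tk d s v)
    (hA : IsForest src dst (support f)) :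
    ∃ τ : OutTree src dst s (sinkSet sk tk s), fbarT src dst sk tk d s τ ≤ f := by
  obtain ⟨p, hp⟩ := exists_walk_to_sinks hd hf hdiv
  have hfin := Set.toFinite (support f)
  refine ⟨OutTree.ofForest (A := hfin.toFinset) (by rwa [Set.Finite.coe_toFinset]) p
    (fun t ht => (hp t ht).1) (fun t ht e he => hfin.mem_toFinset.2 ((hp t ht).2 e he)), ?_⟩
  exact fbarT_le_of_isForest (fun k => (hd k).le) hf hdiv hA _
    (fun e he => hfin.mem_toFinset.1 he)

theorem exists_convexCombination_fbarT_le (hd : ∀ k, 0 < d k) {f : E → ℝ} (hf : 0 ≤ f)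
    (hdiv : ∀ v, diverg src dst f v = sourcePattern sk tk d s v) :
    ∃ (n : ℕ) (τ : Fin n → OutTree src dst s (sinkSet sk tk s)) (x : Fin n → ℝ),
      (∀ i, 0 ≤ x i) ∧ ∑ i, x i = 1 ∧ ∀ e, treeFlow src dst sk tk d s τ x e ≤ f e := by
  obtain ⟨g, hg, hgf⟩ := exists_mem_convexHull_le (Set.range (fbarT src dst sk tk d s))
    (sourcePattern sk tk d s) (fun f hf hdiv hA => by
      obtain ⟨τ, hτ⟩ := exists_outTree_le hd hf hdiv hA
      exact ⟨_, ⟨τ, rfl⟩, hτ⟩) f hf hdiv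
  obtain ⟨n, τ, x, hx₀, hx₁, rfl⟩ := exists_fin_of_mem_convexHull_range hg
  refine ⟨n, τ, x, hx₀, hx₁, fun e => ?_⟩
  simpa [treeFlow, Finset.sum_apply, mul_comm] using hgf e

theorem exists_sourceFeasible_of_tree (hd : ∀ k, 0 ≤ d k) (c u : E → ℝ) {n : V → ℕ}
    (τ : ∀ s, Fin (n s) → OutTree src dst s (sinkSet sk tk s)) (x : ∀ s, Fin (n s) → ℝ)
    (hx₀ : ∀ s i, 0 ≤ x s i) (hx₁ : ∀ s ∈ univ.image sk, ∑ i, x s i = 1)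
    (hcap : ∀ e, ∑ s ∈ univ.image sk, treeFlow src dst sk tk d s (τ s) (x s) e ≤ u e) :
    ∃ g, SourceFeasible src dst u sk tk d g ∧ ∑ s, ∑ e, c e * g s e
      = ∑ s ∈ univ.image sk, ∑ i,
          (∑ e ∈ (τ s i).edges, fbarT src dst sk tk d s (τ s i) e * c e) * x s i := by
  set S := univ.image sk
  let g : V → E → ℝ := fun s => if s ∈ S then treeFlow src dst sk tk d s (τ s) (x s) else 0
  have hg : ∀ s ∈ S, g s = treeFlow src dst sk tk d s (τ s) (x s) := fun s hs => if_pos hs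
  have hg₀ : ∀ s ∉ S, g s = 0 := fun s hs => if_neg hs
  have hsum : ∀ F : (E → ℝ) → ℝ, F 0 = 0 →
      ∑ s, F (g s) = ∑ s ∈ S, F (treeFlow src dst sk tk d s (τ s) (x s)) := fun F hF =>
    ((sum_subset (subset_univ S) fun s _ hs => by rw [hg₀ s hs, hF]).symm).trans
      (sum_congr rfl fun s hs => by rw [hg s hs])
  refine ⟨g, ⟨fun s e => ?_, hg₀, fun s hs v => ?_, fun e => ?_⟩, ?_⟩
  · by_cases hs : s ∈ S
    · rw [hg s hs]
      exact treeFlow_nonneg hd _ (hx₀ s) e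
    · simp [hg₀ s hs]
  · rw [hg s hs]
    exact diverg_treeFlow _ (hx₁ s hs) v
  · rw [hsum (· e) rfl]
    exact hcap e
  · rw [hsum (fun h => ∑ e, c e * h e) (by simp)]
    exact sum_congr rfl fun s _ => (sum_treeCost _ _ c).symm

theorem exists_tree_le_of_sourceFeasible {c u : E → ℝ} (hc : ∀ e, 0 ≤ c e)
    (hd : ∀ k, 0 < d k) {g : V → E → ℝ} (hg : SourceFeasible src dst u sk tk d g) :
    ∃ (n : V → ℕ) (τ : ∀ s, Fin (n s) → OutTree src dst s (sinkSet sk tk s))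
      (x : ∀ s, Fin (n s) → ℝ), (∀ s i, 0 ≤ x s i) ∧ (∀ s ∈ univ.image sk, ∑ i, x s i = 1) ∧
      (∀ e, ∑ s ∈ univ.image sk, treeFlow src dst sk tk d s (τ s) (x s) e ≤ u e) ∧
      ∑ s ∈ univ.image sk, ∑ i,
          (∑ e ∈ (τ s i).edges, fbarT src dst sk tk d s (τ s i) e * c e) * x s i
        ≤ ∑ s, ∑ e, c e * g s e := by
  obtain ⟨hg₀, -, hgdiv, hgcap⟩ := hg
  have hdec : ∀ s, ∃ (n : ℕ) (τ : Fin n → OutTree src dst s (sinkSet sk tk s))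
      (x : Fin n → ℝ), (∀ i, 0 ≤ x i) ∧ (s ∈ univ.image sk → ∑ i, x i = 1) ∧
      ∀ e, treeFlow src dst sk tk d s τ x e ≤ g s e := by
    intro s
    by_cases hs : s ∈ univ.image sk
    · obtain ⟨n, τ, x, h₀, h₁, hle⟩ :=
        exists_convexCombination_fbarT_le hd (fun e => hg₀ s e) (hgdiv s hs)
      exact ⟨n, τ, x, h₀, fun _ => h₁, hle⟩
    · exact ⟨0, Fin.elim0, Fin.elim0, fun i => i.elim0, fun h => absurd h hs,
        fun e => by simpa [treeFlow] using hg₀ s e⟩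
  choose n τ x hx₀ hx₁ hle using hdec
  refine ⟨n, τ, x, hx₀, hx₁, fun e => ?_, ?_⟩
  · calc ∑ s ∈ univ.image sk, treeFlow src dst sk tk d s (τ s) (x s) e
        ≤ ∑ s ∈ univ.image sk, g s e := sum_le_sum fun s _ => hle s e
      _ ≤ ∑ s, g s e := sum_le_sum_of_subset_of_nonneg (subset_univ _) fun s _ _ => hg₀ s e
      _ ≤ u e := hgcap e
  · calc _ = ∑ s ∈ univ.image sk, ∑ e, c e * treeFlow src dst sk tk d s (τ s) (x s) e :=
          sum_congr rfl fun s _ => sum_treeCost _ _ c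
      _ ≤ ∑ s ∈ univ.image sk, ∑ e, c e * g s e :=
          sum_le_sum fun s _ => sum_le_sum fun e _ => mul_le_mul_of_nonneg_left (hle s e) (hc e)
      _ ≤ ∑ s, ∑ e, c e * g s e := sum_le_sum_of_subset_of_nonneg (subset_univ _)
          fun s _ _ => sum_nonneg fun e _ => mul_nonneg (hc e) (hg₀ s e)

end Trees

theorem stmt8_general {V E K : Type} [Fintype V] [Fintype E] [Fintype K]
    [DecidableEq V] [DecidableEq E]
    (src dst : E → V) (c u : E → ℝ) (hc : ∀ e, 0 ≤ c e)
    (sk tk : K → V) (d : K → ℝ) (hd : ∀ k, 0 < d k)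
    (S : Finset V) (hS : S = Finset.image sk Finset.univ) :
    sInf {z : ℝ | ∃ (n : V → ℕ)
        (τ : ∀ s : V, Fin (n s) → OutTree src dst s (sinkSet sk tk s))
        (x : ∀ s : V, Fin (n s) → ℝ),
        (∀ s i, 0 ≤ x s i) ∧
        (∀ s ∈ S, ∑ i, x s i = 1) ∧
        (∀ e : E, ∑ s ∈ S, ∑ i,
            fbarT src dst sk tk d s (τ s i) e * x s i ≤ u e) ∧
        z = ∑ s ∈ S, ∑ i,
            (∑ e ∈ (τ s i).edges, fbarT src dst sk tk d s (τ s i) e * c e)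
              * x s i}
      = sInf {z : ℝ | ∃ g : V → E → ℝ, SourceFeasible src dst u sk tk d g ∧
          z = ∑ s : V, ∑ e : E, c e * g s e} := by
  subst hS
  refine csInf_eq_csInf_of_forall_exists_le ?_ ?_
  · rintro z ⟨n, τ, x, hx₀, hx₁, hcap, rfl⟩
    obtain ⟨g, hg, hcost⟩ :=
      exists_sourceFeasible_of_tree (fun k => (hd k).le) c u τ x hx₀ hx₁ hcap
    exact ⟨_, ⟨g, hg, rfl⟩, hcost.le⟩
  · rintro z ⟨g, hg, rfl⟩
    obtain ⟨n, τ, x, hx₀, hx₁, hcap, hcost⟩ := exists_tree_le_of_sourceFeasible hc hd hg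
    exact ⟨_, ⟨n, τ, x, hx₀, hx₁, hcap, rfl⟩, hcost⟩

/-- exactness of the tree-based decomposition: provided the
source-based LP is feasible, the optimal value of the tree-based LP (over
convex combinations of trees rooted at the sources, subject to the tree
capacity constraints) equals the optimal value of the source-based LP. -/
theorem stmt8 {V E K : Type} [Fintype V] [Fintype E] [Fintype K]
    [DecidableEq V] [DecidableEq E]
    (src dst : E → V) (c u : E → ℝ) (hc : ∀ e, 0 ≤ c e)
    (sk tk : K → V) (d : K → ℝ) (hd : ∀ k, 0 < d k) (hst : ∀ k, tk k ≠ sk k)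
    (S : Finset V) (hS : S = Finset.image sk Finset.univ)
    (hfeas : ∃ g : V → E → ℝ, SourceFeasible src dst u sk tk d g) :
    sInf {z : ℝ | ∃ (n : V → ℕ)
        (τ : ∀ s : V, Fin (n s) → OutTree src dst s (sinkSet sk tk s))
        (x : ∀ s : V, Fin (n s) → ℝ),
        (∀ s i, 0 ≤ x s i) ∧
        (∀ s ∈ S, ∑ i, x s i = 1) ∧
        (∀ e : E, ∑ s ∈ S, ∑ i,
            fbarT src dst sk tk d s (τ s i) e * x s i ≤ u e) ∧
        z = ∑ s ∈ S, ∑ i,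
            (∑ e ∈ (τ s i).edges, fbarT src dst sk tk d s (τ s i) e * c e)
              * x s i}
      = sInf {z : ℝ | ∃ g : V → E → ℝ, SourceFeasible src dst u sk tk d g ∧
          z = ∑ s : V, ∑ e : E, c e * g s e} :=
  stmt8_general src dst c u hc sk tk d hd S hS
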